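/- Let q ∈ ℂ with |q| < 1/3, and let φ(q) = ∑_{n∈ℤ} q^{n²} = 1 + 2∑_{n≥1} q^{n²} be Ramanujan's theta function. Then the family ((−2)^{ℓ(c)} q^{|c|}) indexed by compositions c ∈ C_{P₄} into square parts is summable, φ(q) ≠ 0, and ∑_{c∈C_{P₄}} (−2)^{ℓ(c)} q^{|c|} = 1/φ(q). -/

import Mathlib

/-!
A composition into square parts is a list `((n₁ + 1)², …, (n_k + 1)²)`, and its weight
`(-2)^k q^{∑ (nᵢ + 1)²}` is the product of the weights `w n = -2 q^{(n+1)²}` of its parts. Summing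
over lists of length `k` gives `(∑ w)^k`, so the whole series is the geometric series
`∑ (∑ w)^k = (1 - ∑ w)⁻¹ = φ(q)⁻¹`. Everything converges absolutely as soon as
`∑ |w n| ≤ 2 ∑ |q|^{n+1} = 2|q| / (1 - |q|) < 1`, which is exactly the condition `|q| < 1/3`.
-/

section TupleSums

variable {ι R : Type*} [NormedCommRing R] {f : ι → R}

lemma summable_norm_prod_fin_tuple (hf : Summable (‖f ·‖)) :
    ∀ k : ℕ, Summable fun v : Fin k → ι => ‖∏ i, f (v i)‖
  | 0 => (hasSum_fintype _).summable
  | k + 1 => by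
    rw [← (Fin.consEquiv fun _ => ι).summable_iff]
    refine Summable.of_nonneg_of_le (fun _ => norm_nonneg _) (fun p => ?_)
      (hf.mul_of_nonneg (summable_norm_prod_fin_tuple hf k) (fun _ => norm_nonneg _)
        fun _ => norm_nonneg _)
    simpa [Fin.prod_univ_succ] using norm_mul_le _ _

lemma hasSum_prod_fin_tuple [CompleteSpace R] (hf : Summable (‖f ·‖)) :
    ∀ k : ℕ, HasSum (fun v : Fin k → ι => ∏ i, f (v i)) ((∑' a, f a) ^ k)
  | 0 => by simp
  | k + 1 => by
    have hk := summable_norm_prod_fin_tuple hf k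
    rw [← (Fin.consEquiv fun _ => ι).hasSum_iff, pow_succ', ← (hasSum_prod_fin_tuple hf k).tsum_eq,
      tsum_mul_tsum_of_summable_norm hf hk]
    convert (summable_mul_of_summable_norm hf hk).hasSum using 2 with p
    simp [Fin.prod_univ_succ]

end TupleSums

lemma hasSum_list_prod_map {ι 𝕜 : Type*} [NormedField 𝕜] [CompleteSpace 𝕜] {f : ι → 𝕜}
    (hf : Summable (‖f ·‖)) (hlt : ∑' a, ‖f a‖ < 1) :
    HasSum (fun l : List ι => (l.map f).prod) (1 - ∑' a, f a)⁻¹ := by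
  have hnorm : Summable fun a => ‖‖f a‖‖ := by simpa using hf
  have hsigma : Summable fun p : Σ k, Fin k → ι => ∏ i, f (p.2 i) := by
    refine Summable.of_norm_bounded (g := fun p => ∏ i, ‖f (p.2 i)‖) ?_
      fun p => Finset.norm_prod_le _ _
    refine (summable_sigma_of_nonneg fun p => Finset.prod_nonneg fun _ _ => norm_nonneg _).2
      ⟨fun k => (hasSum_prod_fin_tuple hnorm k).summable, ?_⟩
    simpa only [(hasSum_prod_fin_tuple hnorm _).tsum_eq]
      using summable_geometric_of_lt_one (tsum_nonneg fun _ => norm_nonneg _) hlt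
  have hgeom : HasSum (fun k : ℕ => (∑' a, f a) ^ k) (∑' p : Σ k, Fin k → ι, ∏ i, f (p.2 i)) :=
    hsigma.hasSum.sigma fun k => hasSum_prod_fin_tuple hf k
  rw [← hgeom.unique (hasSum_geometric_of_norm_lt_one
    ((norm_tsum_le_tsum_norm hf).trans_lt hlt)), ← List.equivSigmaTuple.symm.hasSum_iff]
  convert hsigma.hasSum using 2 with p
  simp [List.equivSigmaTuple, List.map_ofFn, List.prod_ofFn]

noncomputable def Equiv.listMapOfInjective {ι α : Type*} {g : ι → α} (hg : g.Injective) :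
    List ι ≃ {l : List α // ∀ a ∈ l, a ∈ Set.range g} :=
  (Equiv.ofInjective _ (List.map_injective_iff.2 hg)).trans
    (Equiv.setCongr (Set.range_list_map g))

lemma List.prod_map_mul_pow {ι M : Type*} [CommMonoid M] (c x : M) (g : ι → ℕ) (l : List ι) :
    (l.map fun a => c * x ^ g a).prod = c ^ (l.map g).length * x ^ (l.map g).sum := by
  induction l with
  | nil => simp
  | cons a l ih =>
    simp only [map_cons, prod_cons, ih, length_cons, sum_cons, pow_succ', pow_add, mul_mul_mul_comm]

lemma mem_range_succ_sq_iff {i : ℕ} :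
    i ∈ Set.range (fun n : ℕ => (n + 1) ^ 2) ↔ ∃ n, 1 ≤ n ∧ i = n ^ 2 := by
  constructor
  · rintro ⟨n, rfl⟩; exact ⟨n + 1, by omega, rfl⟩
  · rintro ⟨n, hn, rfl⟩; exact ⟨n - 1, by simp only [Nat.sub_add_cancel hn]⟩

lemma succ_sq_injective : Function.Injective fun n : ℕ => (n + 1) ^ 2 :=
  (Nat.pow_left_injective two_ne_zero).comp Nat.succ_injective

lemma pow_succ_sq_le_mul_pow {r : ℝ} (hr0 : 0 ≤ r) (hr1 : r ≤ 1) (n : ℕ) :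
    r ^ ((n + 1) ^ 2) ≤ r * r ^ n := by
  rw [← pow_succ']
  exact pow_le_pow_of_le_one hr0 hr1 (by nlinarith)

lemma summable_pow_succ_sq {r : ℝ} (hr0 : 0 ≤ r) (hr1 : r < 1) :
    Summable fun n : ℕ => r ^ ((n + 1) ^ 2) :=
  ((summable_geometric_of_lt_one hr0 hr1).mul_left r).of_nonneg_of_le (fun _ => by positivity)
    (pow_succ_sq_le_mul_pow hr0 hr1.le)

lemma two_mul_tsum_pow_succ_sq_lt_one {r : ℝ} (hr0 : 0 ≤ r) (hr : r < 1 / 3) :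
    2 * ∑' n : ℕ, r ^ ((n + 1) ^ 2) < 1 := by
  have hr1 : r < 1 := by linarith
  have hle : ∑' n : ℕ, r ^ ((n + 1) ^ 2) ≤ ∑' n : ℕ, r * r ^ n :=
    (summable_pow_succ_sq hr0 hr1).tsum_le_tsum (pow_succ_sq_le_mul_pow hr0 hr1.le)
      ((summable_geometric_of_lt_one hr0 hr1).mul_left r)
  rw [tsum_mul_left, tsum_geometric_of_lt_one hr0 hr1] at hle
  have : r * (1 - r)⁻¹ < 1 / 2 := by
    rw [← div_eq_mul_inv, div_lt_iff₀ (by linarith)]; linarith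
  linarith

/-- The reciprocal of Ramanujan's theta function `φ(q) = 1 + 2∑_{n≥1} q^{n²}` is the
sum of `(-2)^{ℓ(c)} q^{|c|}` over compositions into square parts, for `|q| < 1/3`. -/
theorem reciprocal_phi_as_composition_series (q : ℂ) (hq : ‖q‖ < 1 / 3) :
    Summable (fun c : {l : List ℕ // ∀ i ∈ l, ∃ n : ℕ, 1 ≤ n ∧ i = n ^ 2} =>
        (-2 : ℂ) ^ c.val.length * q ^ c.val.sum) ∧
    (1 + 2 * ∑' n : ℕ, q ^ ((n + 1) ^ 2)) ≠ 0 ∧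
    ∑' c : {l : List ℕ // ∀ i ∈ l, ∃ n : ℕ, 1 ≤ n ∧ i = n ^ 2},
        (-2 : ℂ) ^ c.val.length * q ^ c.val.sum
      = (1 + 2 * ∑' n : ℕ, q ^ ((n + 1) ^ 2))⁻¹ := by
  set w : ℕ → ℂ := fun n => -2 * q ^ ((n + 1) ^ 2)
  have hw_norm : (‖w ·‖) = fun n => 2 * ‖q‖ ^ ((n + 1) ^ 2) := by ext n; simp [w]
  have hw : Summable (‖w ·‖) := by
    rw [hw_norm]; exact (summable_pow_succ_sq (norm_nonneg q) (by linarith)).mul_left 2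
  have hw_lt : ∑' n, ‖w n‖ < 1 := by
    rw [hw_norm, tsum_mul_left]; exact two_mul_tsum_pow_succ_sq_lt_one (norm_nonneg q) hq
  have hphi : 1 + 2 * ∑' n : ℕ, q ^ ((n + 1) ^ 2) = 1 - ∑' n, w n := by
    rw [tsum_mul_left]; ring
  let e := (Equiv.listMapOfInjective succ_sq_injective).trans
    (Equiv.subtypeEquivRight fun l => forall₂_congr fun _ _ => mem_range_succ_sq_iff)
  have hsum : HasSum (fun c : {l : List ℕ // ∀ i ∈ l, ∃ n : ℕ, 1 ≤ n ∧ i = n ^ 2} =>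
      (-2 : ℂ) ^ c.val.length * q ^ c.val.sum) (1 + 2 * ∑' n : ℕ, q ^ ((n + 1) ^ 2))⁻¹ := by
    rw [← e.hasSum_iff, hphi]
    exact (hasSum_list_prod_map hw hw_lt).congr_fun fun l => (List.prod_map_mul_pow _ _ _ l).symm
  refine ⟨hsum.summable, ?_, hsum.tsum_eq⟩
  rw [hphi, sub_ne_zero]
  intro h
  simpa [← h] using (norm_tsum_le_tsum_norm hw).trans_lt hw_lt
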